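/- For every set S of positive integers, the minimal set M(S) is finite. -/

import Mathlib

/-- `Subseq x y` means the decimal digit string of `x` is a subsequence of that of `y`. -/
def Subseq (x y : ℕ) : Prop := (Nat.digits 10 x).Sublist (Nat.digits 10 y)

/-- The minimal set of `S`: elements of `S` containing no smaller element of `S`
as a subsequence of their decimal digits. -/
def minimalSet (S : Set ℕ) : Set ℕ := {s ∈ S | ¬ ∃ n ∈ S, n < s ∧ Subseq n s}

/-!
By Higman's lemma, words over the finite alphabet of decimal digits are well-quasi-ordered by
the subsequence relation. A subsequence of the digits of `y` is never a larger number than `y`,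
so any two distinct elements of `M(S)` are incomparable; an antichain of a well-quasi-order is
finite.
-/

theorem List.sublistForall₂_eq_eq_sublist {α : Type*} :
    List.SublistForall₂ (α := α) (· = ·) = List.Sublist := by
  ext l₁ l₂
  simp [List.sublistForall₂_iff, List.forall₂_eq_eq_eq]

theorem Set.Finite.partiallyWellOrderedOn_sublist {α : Type*} {s : Set α} (hs : s.Finite) :
    {l : List α | ∀ x ∈ l, x ∈ s}.PartiallyWellOrderedOn List.Sublist := by
  rw [← List.sublistForall₂_eq_eq_sublist]
  exact Set.PartiallyWellOrderedOn.partiallyWellOrderedOn_sublistForall₂ _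
    hs.partiallyWellOrderedOn

theorem wellQuasiOrdered_subseq : WellQuasiOrdered Subseq := fun f =>
  (Set.finite_Iio 10).partiallyWellOrderedOn_sublist.exists_lt (f := fun k => Nat.digits 10 (f k))
    fun _ _ hd => Nat.digits_lt_base (by norm_num) hd

theorem Subseq.le {x y : ℕ} (h : Subseq x y) : x ≤ y := by
  by_contra! hyx
  have hlen : (Nat.digits 10 y).length ≤ (Nat.digits 10 x).length :=
    Nat.le_length_digits_le 10 _ _ hyx.le
  exact hyx.ne' (Nat.digits.injective 10 (h.eq_of_length (le_antisymm h.length_le hlen)))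

theorem isAntichain_subseq_minimalSet (S : Set ℕ) : IsAntichain Subseq (minimalSet S) :=
  fun _ hx _ hy hne hxy => hy.2 ⟨_, hx.1, lt_of_le_of_ne hxy.le hne, hxy⟩

theorem minimalSet_finite_general (S : Set ℕ) :
    (minimalSet S).Finite :=
  (isAntichain_subseq_minimalSet S).finite_of_partiallyWellOrderedOn
    (Set.partiallyWellOrderedOn_of_wellQuasiOrdered wellQuasiOrdered_subseq _)

theorem minimalSet_finite (S : Set ℕ) (hS : ∀ n ∈ S, 1 ≤ n) :
    (minimalSet S).Finite :=
  minimalSet_finite_general S
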